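/- In any K-algebra in which J₂x = x holds for all x (a Boolean member), the binary term φ(x,y) := J₂x ∨ (J₂x ∧ y) satisfies φ(x,y) = x for all x, y; and in any K-algebra in which J₂x = 1 holds for all x (a semilattice member), φ(x,y) = y for all x, y. Hence the term φ witnesses independence of the subvarieties BA and SL of V(BCA). -/

import Mathlib

/-- The operations of a Bochvar-type algebra ⟨A, ∨, ¬, J₂, 0, 1⟩. -/
class KOps (α : Type*) where
  sup : α → α → α
  neg : α → α
  J : α → α
  zero : α
  one : α

namespace KOps

variable {α : Type*} [KOps α]

/-- The meet, defined à la De Morgan: x ∧ y := ¬(¬x ∨ ¬y). -/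
def meet (x y : α) : α := neg (sup (neg x) (neg y))

end KOps

open KOps

/-- A K-algebra: an algebra satisfying the identities K1–K12 axiomatising
the variety generated by Bochvar algebras. (K5 holds by definition of `meet`.) -/
class KAlgebra (α : Type*) [KOps α] : Prop where
  K1 : ∀ x : α, sup x x = x
  K2 : ∀ x y : α, sup x y = sup y x
  K3 : ∀ x y z : α, sup (sup x y) z = sup x (sup y z)
  K4 : ∀ x : α, neg (neg x) = x
  K5 : ∀ x y : α, meet x y = neg (sup (neg x) (neg y))
  K6 : ∀ x y : α, meet x (sup (neg x) y) = meet x y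
  K7 : ∀ x : α, sup zero x = x
  K8 : (one : α) = neg zero
  K9 : ∀ x : α, sup (J x) (neg (J x)) = one
  K10 : ∀ x y : α, sup x (J y) = sup x (J (sup x y))
  K11 : ∀ x : α, meet x (J x) = x
  K12 : ∀ x : α, J (meet x (neg x)) = zero

/-!
In the Boolean member, K12 with `J₂ = id` gives `x ∧ ¬x = 0`, hence `1 ∨ z = 1` and `0 ∧ y = 0`;
the dual of K6 then yields absorption `x ∨ (x ∧ y) = x ∨ (¬x ∧ x ∧ y) = x ∨ 0 = x`.
In the semilattice member, K12 with `J₂ = 1` gives `0 = 1`, so `¬0 = 0` and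
`0 ∨ (0 ∧ y) = ¬(0 ∨ ¬y) = y`.
-/

namespace KAlgebra

variable {α : Type*} [KOps α] [KAlgebra α]

theorem meet_comm (x y : α) : meet x y = meet y x := by
  simp only [meet, K2 (neg x)]

theorem meet_assoc (x y z : α) : meet (meet x y) z = meet x (meet y z) := by
  simp only [meet, K4, K3]

theorem sup_meet_neg (x y : α) : sup x (meet (neg x) y) = sup x y := by
  have h := congrArg neg (K6 (neg x) (neg y))
  simp only [meet, K4] at h ⊢
  exact h

theorem sup_neg_self_of_meet_neg_self {x : α} (h : meet x (neg x) = zero) :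
    sup (neg x) x = one := by
  rw [K8, ← h, meet, K4, K4]

theorem one_sup_of_meet_neg_self (h : ∀ x : α, meet x (neg x) = zero) (z : α) :
    sup one z = one := by
  rw [← sup_neg_self_of_meet_neg_self (h z), K3, K1]

theorem zero_meet_of_meet_neg_self (h : ∀ x : α, meet x (neg x) = zero) (y : α) :
    meet zero y = zero := by
  rw [meet, ← K8, one_sup_of_meet_neg_self h, K8, K4]

theorem sup_meet_self_of_meet_neg_self (h : ∀ x : α, meet x (neg x) = zero) (x y : α) :
    sup x (meet x y) = x := by
  rw [← sup_meet_neg, ← meet_assoc, meet_comm (neg x), h, zero_meet_of_meet_neg_self h,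
    K2, K7]

theorem meet_neg_self_of_J_eq_self (hJ : ∀ x : α, J x = x) (x : α) :
    meet x (neg x) = zero := by
  simpa only [hJ] using K12 x

theorem zero_eq_one_of_J_eq_one (hJ : ∀ x : α, J x = one) : (zero : α) = one := by
  rw [← K12 zero, hJ]

theorem zero_meet_of_zero_eq_one (h : (zero : α) = one) (y : α) : meet zero y = y := by
  rw [meet, ← K8, ← h, K7, K4]

end KAlgebra

/-- The term φ(x,y) := J₂x ∨ (J₂x ∧ y) witnesses independence of BA and SL. -/
theorem stmt9 {α : Type*} [KOps α] [KAlgebra α] :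
    ((∀ x : α, J x = x) → ∀ x y : α, sup (J x) (meet (J x) y) = x) ∧
    ((∀ x : α, J x = one) → ∀ x y : α, sup (J x) (meet (J x) y) = y) := by
  refine ⟨fun hJ x y => ?_, fun hJ x y => ?_⟩
  · rw [hJ x]
    exact KAlgebra.sup_meet_self_of_meet_neg_self (KAlgebra.meet_neg_self_of_J_eq_self hJ) x y
  · have h01 := KAlgebra.zero_eq_one_of_J_eq_one hJ
    rw [hJ x, ← h01, KAlgebra.K7, KAlgebra.zero_meet_of_zero_eq_one h01]
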